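/- If F > F̄_max, then Q̄(x) > 0 for all x ∈ [0,1); in particular the replicator dynamics ẋ = x(1−x)Q̄(x) of the bribery game has no interior equilibrium in (0,1), the gradient of selection x(1−x)Q̄(x) is positive on (0,1), and the population evolves toward full cooperation (x = 1 is the attracting boundary state). -/

import Mathlib

/-- The bribery-game gradient function Q̄. -/
noncomputable def Qbar (N : ℕ) (c τ β rp α F h γ p q : ℝ) (x : ℝ) : ℝ :=
  F * c / N - c - 2 * α * β * τ * rp + β * τ * rp
    + ((N : ℝ) - 1) / N * γ * h * (q - p)
    - α * β * τ * rp * (∑ k ∈ Finset.range (N - 1), (1 - x) ^ (k + 1))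
    + (1 - α) * β * τ * rp * (∑ k ∈ Finset.range (N - 1), x ^ (k + 1))

/-- The lower threshold F̄_min for the pool multiplier in the bribery game. -/
noncomputable def Fbarmin (N : ℕ) (c τ β rp α h γ p q : ℝ) : ℝ :=
  (N * c - ((N : ℝ) - 1) * γ * h * (q - p) - N * β * τ * rp * (1 - 2 * α)
    - N * ((N : ℝ) - 1) * (1 - α) * β * τ * rp) / c

/-- The upper threshold F̄_max for the pool multiplier in the bribery game. -/
noncomputable def Fbarmax (N : ℕ) (c τ β rp α h γ p q : ℝ) : ℝ :=
  (N * c - ((N : ℝ) - 1) * γ * h * (q - p) - N * β * τ * rp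
    + N * α * β * τ * rp * ((N : ℝ) + 1)) / c

/-!
Bounding each term (1 − x)^(k+1) of the sum weighted by −α by 1, and dropping the nonnegative sum
weighted by 1 − α, gives N·Q̄(x) ≥ c·(F − F̄_max) on [0, 1]: F̄_max is exactly the value of F at which
this bound vanishes.
-/

open Finset

theorem sum_range_pow_succ_le_card {R : Type*} [Semiring R] [PartialOrder R] [IsOrderedRing R]
    {y : R} (hy0 : 0 ≤ y) (hy1 : y ≤ 1) (n : ℕ) :
    ∑ k ∈ range n, y ^ (k + 1) ≤ n := by
  simpa using sum_le_card_nsmul (range n) _ 1 fun k _ ↦ pow_le_one₀ hy0 hy1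

theorem mul_sub_Fbarmax_le_card_mul_Qbar {N : ℕ} (hN : 1 ≤ N) {c τ β rp α : ℝ} (F h γ p q : ℝ)
    {x : ℝ} (hc : c ≠ 0) (hβτrp : 0 ≤ β * τ * rp) (hα0 : 0 ≤ α) (hα1 : α ≤ 1)
    (hx0 : 0 ≤ x) (hx1 : x ≤ 1) :
    c * (F - Fbarmax N c τ β rp α h γ p q) ≤ N * Qbar N c τ β rp α F h γ p q x := by
  have hN0 : (N : ℝ) ≠ 0 := by positivity
  have hsum_one_sub : ∑ k ∈ range (N - 1), (1 - x) ^ (k + 1) ≤ (N : ℝ) - 1 := by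
    simpa [Nat.cast_sub hN] using sum_range_pow_succ_le_card (sub_nonneg.2 hx1) (by linarith) (N - 1)
  have hsum_nonneg : 0 ≤ ∑ k ∈ range (N - 1), x ^ (k + 1) :=
    sum_nonneg fun k _ ↦ pow_nonneg hx0 _
  have hgap : N * Qbar N c τ β rp α F h γ p q x - c * (F - Fbarmax N c τ β rp α h γ p q) =
      N * (α * (β * τ * rp) * ((N - 1) - ∑ k ∈ range (N - 1), (1 - x) ^ (k + 1))
        + (1 - α) * (β * τ * rp) * ∑ k ∈ range (N - 1), x ^ (k + 1)) := by
    rw [Fbarmax, Qbar]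
    field_simp
    ring
  rw [← sub_nonneg, hgap]
  have := sub_nonneg.2 hα1
  have := sub_nonneg.2 hsum_one_sub
  positivity

theorem Qbar_pos_of_Fbarmax_lt {N : ℕ} (hN : 1 ≤ N) {c τ β rp α F : ℝ} (h γ p q : ℝ) {x : ℝ}
    (hc : 0 < c) (hβτrp : 0 ≤ β * τ * rp) (hα0 : 0 ≤ α) (hα1 : α ≤ 1)
    (hF : Fbarmax N c τ β rp α h γ p q < F) (hx0 : 0 ≤ x) (hx1 : x ≤ 1) :
    0 < Qbar N c τ β rp α F h γ p q x :=
  pos_of_mul_pos_right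
    ((mul_pos hc (sub_pos.2 hF)).trans_le
      (mul_sub_Fbarmax_le_card_mul_Qbar hN F h γ p q hc.ne' hβτrp hα0 hα1 hx0 hx1))
    (Nat.cast_nonneg N)

theorem bg_cooperation_dominance_general (N : ℕ) (hN : 2 ≤ N) (c τ β rp α F h γ p q : ℝ)
    (hc : 0 < c) (hτ : 0 < τ) (hβ : 0 < β) (hrp : 0 < rp) (hα0 : 0 ≤ α) (hα1 : α ≤ 1)
    (hF : Fbarmax N c τ β rp α h γ p q < F) :
    (∀ x : ℝ, 0 ≤ x → x < 1 → 0 < Qbar N c τ β rp α F h γ p q x) ∧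
    (∀ x : ℝ, 0 < x → x < 1 → 0 < x * (1 - x) * Qbar N c τ β rp α F h γ p q x) ∧
    ¬∃ x : ℝ, 0 < x ∧ x < 1 ∧ x * (1 - x) * Qbar N c τ β rp α F h γ p q x = 0 := by
  have hQbar (x : ℝ) (hx0 : 0 ≤ x) (hx1 : x < 1) : 0 < Qbar N c τ β rp α F h γ p q x :=
    Qbar_pos_of_Fbarmax_lt (by omega) h γ p q hc (by positivity) hα0 hα1 hF hx0 hx1.le
  have hgradient (x : ℝ) (hx0 : 0 < x) (hx1 : x < 1) :
      0 < x * (1 - x) * Qbar N c τ β rp α F h γ p q x :=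
    mul_pos (mul_pos hx0 (sub_pos.2 hx1)) (hQbar x hx0.le hx1)
  exact ⟨hQbar, hgradient, fun ⟨x, hx0, hx1, hx⟩ ↦ (hgradient x hx0 hx1).ne' hx⟩

/-- If F > F̄_max then Q̄(x) > 0 on [0,1), the gradient of selection x(1−x)Q̄(x) is
positive on (0,1), and the replicator dynamics of the bribery game has no interior
equilibrium: the population evolves toward full cooperation. -/
theorem bg_cooperation_dominance (N : ℕ) (hN : 2 ≤ N) (c τ β rp α F h γ p q : ℝ)
    (hc : 0 < c) (hτ : 0 < τ) (hβ : 0 < β) (hrp : 0 < rp) (hα0 : 0 ≤ α) (hα1 : α ≤ 1)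
    (hh : 0 < h) (hγ0 : 0 < γ) (hγ1 : γ ≤ 1) (hp0 : 0 ≤ p) (hp1 : p ≤ 1)
    (hq0 : 0 ≤ q) (hq1 : q ≤ 1)
    (hF : Fbarmax N c τ β rp α h γ p q < F) :
    (∀ x : ℝ, 0 ≤ x → x < 1 → 0 < Qbar N c τ β rp α F h γ p q x) ∧
    (∀ x : ℝ, 0 < x → x < 1 → 0 < x * (1 - x) * Qbar N c τ β rp α F h γ p q x) ∧
    ¬∃ x : ℝ, 0 < x ∧ x < 1 ∧ x * (1 - x) * Qbar N c τ β rp α F h γ p q x = 0 :=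
  bg_cooperation_dominance_general N hN c τ β rp α F h γ p q hc hτ hβ hrp hα0 hα1 hF
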